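/- Let $T^n$ be an $n$-tree with weight $w \geq 0$ satisfying the surrogate maximum principle with parameters $\kappa \in (0,1]$, $C$. Let $\nu : T^n \to [0,\infty)$ be nonzero, and define $E := \{ \alpha : \mathbf{V}^\nu(\alpha) > (2C')^{-1/\kappa'} \mathcal{E}[\nu] / |\nu| \}$, where $C', \kappa'$ are the constants in the diagonal estimate $\sum \mathbf{V}^\mu_\delta \, \mu \leq C' (\delta |\mu|)^{\kappa'} \mathcal{E}[\mu]^{1-\kappa'}$ with $\kappa' = \frac{2\kappa}{1+\kappa}$, $C' = C^{2/(1+\kappa)}$. Then $\mathcal{E}_E[\nu] := \sum_{\alpha \in E} w(\alpha) (\mathbf{I}^*\nu(\alpha))^2 \geq \tfrac{1}{2} \mathcal{E}[\nu]$. -/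

import Mathlib

/-!
Testing the surrogate maximum principle against `μ = ρ = ν` gives the diagonal estimate
`𝓔_δ ≤ C (δ |ν|)^κ (𝓔_δ 𝓔)^((1-κ)/2)` for the energy `𝓔_δ` of `ν` on `{V^ν ≤ δ}`.
The threshold `δ = (2C')^(-1/κ') 𝓔 / |ν|` is chosen so that the right-hand side collapses to
`(𝓔/2)^((1+κ)/2) 𝓔_δ^((1-κ)/2)`, whence `𝓔_δ ≤ 𝓔/2`; the energy of `ν` on the
complementary set `{V^ν > δ}` is then at least `𝓔/2`.
-/

open Finset
open scoped Classical

/-- A tree order: the set of elements above any given element is totally ordered. -/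
def IsTreeOrder (T : Type*) [PartialOrder T] : Prop :=
  ∀ ω a b : T, ω ≤ a → ω ≤ b → a ≤ b ∨ b ≤ a

/-- The Hardy operator `I f α = ∑_{α' ≥ α} f α'`. -/
noncomputable def hI {T : Type*} [Fintype T] [PartialOrder T] (f : T → ℝ) (a : T) : ℝ :=
  ∑ b, if a ≤ b then f b else 0

/-- The adjoint Hardy operator `I* f β = ∑_{α ≤ β} f α`. -/
noncomputable def hIstar {T : Type*} [Fintype T] [PartialOrder T] (f : T → ℝ) (b : T) : ℝ :=
  ∑ a, if a ≤ b then f a else 0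

/-- `b` is a child of `β`: a maximal element of the set of elements strictly below `β`. -/
def IsChild {T : Type*} [PartialOrder T] (b β : T) : Prop :=
  b < β ∧ ∀ c, b < c → c < β → False

/-- The difference operator `Δ f β = f β - ∑_{β' ∈ ch β} f β'`. -/
noncomputable def hDelta {T : Type*} [Fintype T] [PartialOrder T] (f : T → ℝ) (β : T) : ℝ :=
  f β - ∑ b, if IsChild b β then f b else 0

/-- A superadditive function on a tree: `f β ≥ ∑_{β' ∈ ch β} f β'` for all `β`. -/
def Superadd {T : Type*} [Fintype T] [PartialOrder T] (f : T → ℝ) : Prop :=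
  ∀ β : T, (∑ b, if IsChild b β then f b else 0) ≤ f β

namespace Real

lemma le_of_le_rpow_mul_rpow_one_sub {S A p : ℝ} (hS : 0 ≤ S) (hA : 0 ≤ A) (hp : 0 < p)
    (h : S ≤ A ^ p * S ^ (1 - p)) : S ≤ A := by
  obtain rfl | hS := hS.eq_or_lt
  · exact hA
  have hSp : S ^ p * S ^ (1 - p) = S := by
    rw [← rpow_add hS, add_sub_cancel, rpow_one]
  have h' : S ^ p * S ^ (1 - p) ≤ A ^ p * S ^ (1 - p) := by rwa [hSp]
  rw [mul_le_mul_iff_of_pos_right (rpow_pos_of_pos hS _)] at h'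
  exact (rpow_le_rpow_iff hS.le hA hp).mp h'

end Real

/-- The threshold constant `(2C')^(-1/κ')` with `κ' = 2κ/(1+κ)` and `C' = C^(2/(1+κ))`. -/
noncomputable def diagThreshold (κ C : ℝ) : ℝ :=
  (2 * C ^ ((2 : ℝ) / (1 + κ))) ^ (-(1 : ℝ) / (2 * κ / (1 + κ)))

lemma diagThreshold_pos {κ C : ℝ} (hC : 0 < C) : 0 < diagThreshold κ C := by
  unfold diagThreshold
  have := Real.rpow_pos_of_pos hC ((2 : ℝ) / (1 + κ))
  positivity

lemma mul_diagThreshold_rpow {κ C : ℝ} (hκ : 0 < κ) (hC : 0 < C) :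
    C * diagThreshold κ C ^ κ = 2 ^ (-((1 + κ) / 2)) := by
  have hC' := Real.rpow_pos_of_pos hC ((2 : ℝ) / (1 + κ))
  have hexp : -(1 : ℝ) / (2 * κ / (1 + κ)) * κ = -((1 + κ) / 2) := by
    field_simp
  have hexpC : (2 : ℝ) / (1 + κ) * -((1 + κ) / 2) = -1 := by
    field_simp
  rw [diagThreshold, ← Real.rpow_mul (by positivity), hexp, Real.mul_rpow zero_le_two hC'.le,
    ← Real.rpow_mul hC.le, hexpC, Real.rpow_neg_one]
  field_simp

lemma diagThreshold_bound_eq {κ C E S : ℝ} (hκ : 0 < κ) (hC : 0 < C) (hE : 0 ≤ E)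
    (hS : 0 ≤ S) :
    C * (diagThreshold κ C * E) ^ κ * (S * E) ^ ((1 - κ) / 2) =
      (E / 2) ^ ((1 + κ) / 2) * S ^ (1 - (1 + κ) / 2) := by
  have hEexp : E ^ κ * E ^ ((1 - κ) / 2) = E ^ ((1 + κ) / 2) := by
    rw [← Real.rpow_add' hE (by linarith)]
    ring_nf
  calc C * (diagThreshold κ C * E) ^ κ * (S * E) ^ ((1 - κ) / 2)
      = C * diagThreshold κ C ^ κ * (E ^ κ * E ^ ((1 - κ) / 2)) * S ^ ((1 - κ) / 2) := by
        rw [Real.mul_rpow (diagThreshold_pos hC).le hE, Real.mul_rpow hS hE]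
        ring
    _ = (E / 2) ^ ((1 + κ) / 2) * S ^ (1 - (1 + κ) / 2) := by
        rw [mul_diagThreshold_rpow hκ hC, hEexp, Real.div_rpow hE zero_le_two,
          Real.rpow_neg zero_le_two, show 1 - (1 + κ) / 2 = (1 - κ) / 2 by ring]
        ring

section Tree

variable {X : Type*} [Fintype X] [PartialOrder X]

lemma sum_hI_mul (g f : X → ℝ) : ∑ a, hI g a * f a = ∑ b, g b * hIstar f b := by
  simp only [hI, hIstar, sum_mul, mul_sum]
  rw [sum_comm]
  refine sum_congr rfl fun b _ => sum_congr rfl fun a _ => ?_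
  split_ifs <;> simp

lemma hIstar_eq_zero_of_sum_eq_zero {f : X → ℝ} (hf : ∀ a, 0 ≤ f a) (h : ∑ a, f a = 0) :
    hIstar f = 0 := by
  have hf0 := (sum_eq_zero_iff_of_nonneg fun a _ => hf a).mp h
  ext b
  simp [hIstar, hf0]

/-- The potential `V^μ = I(w I^* μ)`. -/
noncomputable def potential (w μ : X → ℝ) : X → ℝ :=
  hI fun x => w x * hIstar μ x

noncomputable def energy (w μ : X → ℝ) : ℝ :=
  ∑ a, w a * hIstar μ a ^ 2

/-- The truncated potential `V^μ_δ = I(1_{V^μ ≤ δ} w I^* μ)`. -/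
noncomputable def truncPotential (w μ : X → ℝ) (δ : ℝ) : X → ℝ :=
  hI fun x => (if potential w μ x ≤ δ then 1 else 0) * (w x * hIstar μ x)

noncomputable def truncEnergy (w μ : X → ℝ) (δ : ℝ) : ℝ :=
  ∑ a, (if potential w μ a ≤ δ then 1 else 0) * (w a * hIstar μ a ^ 2)

def SurrogateMaxPrinciple (w : X → ℝ) (κ C : ℝ) : Prop :=
  ∀ μ ρ : X → ℝ, (∀ a, 0 ≤ μ a) → (∀ a, 0 ≤ ρ a) → ∀ δ : ℝ, 0 < δ →
    ∑ a, truncPotential w μ δ a * ρ a ≤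
      C * (δ * ∑ a, ρ a) ^ κ * (truncEnergy w μ δ * energy w ρ) ^ ((1 - κ) / 2)

variable {w : X → ℝ}

lemma energy_nonneg (hw : ∀ a, 0 ≤ w a) (μ : X → ℝ) : 0 ≤ energy w μ :=
  sum_nonneg fun a _ => mul_nonneg (hw a) (sq_nonneg _)

lemma truncEnergy_nonneg (hw : ∀ a, 0 ≤ w a) (μ : X → ℝ) (δ : ℝ) : 0 ≤ truncEnergy w μ δ :=
  sum_nonneg fun a _ => by split_ifs <;> simp [mul_nonneg (hw a) (sq_nonneg (hIstar μ a))]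

lemma truncEnergy_le_energy (hw : ∀ a, 0 ≤ w a) (μ : X → ℝ) (δ : ℝ) :
    truncEnergy w μ δ ≤ energy w μ :=
  sum_le_sum fun a _ => by split_ifs <;> simp [mul_nonneg (hw a) (sq_nonneg (hIstar μ a))]

lemma truncEnergy_eq_energy {μ : X → ℝ} {δ : ℝ} (hδ : ∀ a, potential w μ a ≤ δ) :
    truncEnergy w μ δ = energy w μ :=
  sum_congr rfl fun a _ => by simp [hδ a]

lemma energy_eq_add_truncEnergy (w μ : X → ℝ) (δ : ℝ) :
    energy w μ =
      (∑ a, if δ < potential w μ a then w a * hIstar μ a ^ 2 else 0) + truncEnergy w μ δ := by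
  rw [truncEnergy, ← sum_add_distrib]
  refine sum_congr rfl fun a _ => ?_
  by_cases h : δ < potential w μ a
  · simp [h, h.not_ge]
  · simp [h, not_lt.mp h]

lemma sum_truncPotential_mul_self (w μ : X → ℝ) (δ : ℝ) :
    ∑ a, truncPotential w μ δ a * μ a = truncEnergy w μ δ := by
  rw [truncPotential, sum_hI_mul]
  exact sum_congr rfl fun a _ => by ring

namespace SurrogateMaxPrinciple

variable {κ C : ℝ}

lemma truncEnergy_le (hSMP : SurrogateMaxPrinciple w κ C) {μ : X → ℝ} (hμ : ∀ a, 0 ≤ μ a)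
    {δ : ℝ} (hδ : 0 < δ) :
    truncEnergy w μ δ ≤
      C * (δ * ∑ a, μ a) ^ κ * (truncEnergy w μ δ * energy w μ) ^ ((1 - κ) / 2) := by
  simpa only [sum_truncPotential_mul_self] using hSMP μ μ hμ hμ δ hδ

lemma const_pos (hSMP : SurrogateMaxPrinciple w κ C) {μ : X → ℝ}
    (hμ : ∀ a, 0 ≤ μ a) (hE : 0 < energy w μ) : 0 < C := by
  obtain ⟨B, hB⟩ := (Set.finite_range (potential w μ)).bddAbove
  have hδ : ∀ a, potential w μ a ≤ max B 1 := fun a => (hB ⟨a, rfl⟩).trans (le_max_left _ _)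
  have hdiag := hSMP.truncEnergy_le hμ (δ := max B 1) (lt_max_of_lt_right one_pos)
  rw [truncEnergy_eq_energy hδ] at hdiag
  by_contra! hC
  have : C * (max B 1 * ∑ a, μ a) ^ κ * (energy w μ * energy w μ) ^ ((1 - κ) / 2) ≤ 0 :=
    mul_nonpos_of_nonpos_of_nonneg
      (mul_nonpos_of_nonpos_of_nonneg hC (Real.rpow_nonneg
        (mul_nonneg (le_max_of_le_right zero_le_one) (sum_nonneg fun a _ => hμ a)) _))
      (Real.rpow_nonneg (mul_self_nonneg _) _)
  linarith

lemma truncEnergy_diagThreshold_le (hSMP : SurrogateMaxPrinciple w κ C) (hκ : 0 < κ)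
    (hw : ∀ a, 0 ≤ w a) {μ : X → ℝ} (hμ : ∀ a, 0 ≤ μ a) :
    truncEnergy w μ (diagThreshold κ C * energy w μ / ∑ a, μ a) ≤ energy w μ / 2 := by
  set E := energy w μ
  set M := ∑ a, μ a
  obtain hE | hE := (energy_nonneg hw μ).eq_or_lt
  · linarith [truncEnergy_le_energy hw μ (diagThreshold κ C * E / M)]
  have hM : 0 < M := by
    refine (sum_nonneg fun a _ => hμ a).lt_of_ne fun hM => hE.ne' ?_
    simp [energy, hIstar_eq_zero_of_sum_eq_zero hμ hM.symm]
  have hC := hSMP.const_pos hμ hE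
  have hδ : 0 < diagThreshold κ C * E / M := by
    have := diagThreshold_pos (κ := κ) hC
    positivity
  have hdiag := hSMP.truncEnergy_le hμ hδ
  rw [div_mul_cancel₀ _ hM.ne', diagThreshold_bound_eq hκ hC hE.le (truncEnergy_nonneg hw μ _)]
    at hdiag
  exact Real.le_of_le_rpow_mul_rpow_one_sub (truncEnergy_nonneg hw μ _) (by positivity)
    (by positivity) hdiag

end SurrogateMaxPrinciple

end Tree

theorem stmt19_general {n : ℕ} {T : Fin n → Type*}
    [∀ i, Fintype (T i)] [∀ i, PartialOrder (T i)]
    (κ C : ℝ) (hκ0 : 0 < κ)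
    (w : (∀ i, T i) → ℝ) (hw : ∀ a, 0 ≤ w a)
    -- surrogate maximum principle for the weight `w` with parameters `κ, C`
    (hSMP : ∀ (μ ρ : (∀ i, T i) → ℝ), (∀ a, 0 ≤ μ a) → (∀ a, 0 ≤ ρ a) →
      ∀ δ : ℝ, 0 < δ →
      ∑ a, hI (fun x =>
          (if hI (fun y => w y * hIstar μ y) x ≤ δ then 1 else 0) *
            (w x * hIstar μ x)) a * ρ a
        ≤ C * (δ * ∑ a, ρ a) ^ κ *
          ((∑ a, (if hI (fun y => w y * hIstar μ y) a ≤ δ then 1 else 0) *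
              (w a * hIstar μ a ^ 2)) *
            (∑ a, w a * hIstar ρ a ^ 2)) ^ ((1 - κ) / 2))
    (ν : (∀ i, T i) → ℝ) (hν : ∀ a, 0 ≤ ν a) :
    (1 / 2 : ℝ) * (∑ a, w a * hIstar ν a ^ 2) ≤
      ∑ a, if (2 * C ^ ((2 : ℝ) / (1 + κ))) ^ (-(1 : ℝ) / (2 * κ / (1 + κ))) *
            (∑ b, w b * hIstar ν b ^ 2) / (∑ b, ν b)
          < hI (fun x => w x * hIstar ν x) a
        then w a * hIstar ν a ^ 2 else 0 := by
  set δ := diagThreshold κ C * energy w ν / ∑ b, ν b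
  change (1 / 2 : ℝ) * energy w ν ≤
    ∑ a, if δ < potential w ν a then w a * hIstar ν a ^ 2 else 0
  have hSMP' : SurrogateMaxPrinciple w κ C := hSMP
  linarith [energy_eq_add_truncEnergy w ν δ, hSMP'.truncEnergy_diagThreshold_le hκ0 hw hν]

theorem stmt19 {n : ℕ} {T : Fin n → Type*}
    [∀ i, Fintype (T i)] [∀ i, PartialOrder (T i)]
    (htree : ∀ i, IsTreeOrder (T i)) (κ C : ℝ) (hκ0 : 0 < κ) (hκ1 : κ ≤ 1) (hC : 0 ≤ C)
    (w : (∀ i, T i) → ℝ) (hw : ∀ a, 0 ≤ w a)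
    -- surrogate maximum principle for the weight `w` with parameters `κ, C`
    (hSMP : ∀ (μ ρ : (∀ i, T i) → ℝ), (∀ a, 0 ≤ μ a) → (∀ a, 0 ≤ ρ a) →
      ∀ δ : ℝ, 0 < δ →
      ∑ a, hI (fun x =>
          (if hI (fun y => w y * hIstar μ y) x ≤ δ then 1 else 0) *
            (w x * hIstar μ x)) a * ρ a
        ≤ C * (δ * ∑ a, ρ a) ^ κ *
          ((∑ a, (if hI (fun y => w y * hIstar μ y) a ≤ δ then 1 else 0) *
              (w a * hIstar μ a ^ 2)) *
            (∑ a, w a * hIstar ρ a ^ 2)) ^ ((1 - κ) / 2))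
    (ν : (∀ i, T i) → ℝ) (hν : ∀ a, 0 ≤ ν a) (hν0 : ν ≠ 0) :
    (1 / 2 : ℝ) * (∑ a, w a * hIstar ν a ^ 2) ≤
      ∑ a, if (2 * C ^ ((2 : ℝ) / (1 + κ))) ^ (-(1 : ℝ) / (2 * κ / (1 + κ))) *
            (∑ b, w b * hIstar ν b ^ 2) / (∑ b, ν b)
          < hI (fun x => w x * hIstar ν x) a
        then w a * hIstar ν a ^ 2 else 0 :=
  stmt19_general κ C hκ0 w hw hSMP ν hν
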